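/- arXiv:2405.05172 — 3 statements merged into one kernel-verified Lean document; each statement's English description precedes it below -/
import Mathlib

section
/- Let (X,d) be a doubling metric space and (Y,d_Y) an arbitrary metric space. Let p > 1 and α ∈ (0,1), and let f : X → Y be a (p,α)-compactly Hölder mapping. Then for every bounded set E ⊆ X with upper Minkowski dimension dim_B E = d_E, the image satisfies dim_B f(E) ≤ p·d_E/(α·p + d_E). -/
/-!
Cover `E` at the dyadic scales `t_k = t₀ 2^{-k}` by maximal `t_k`-separated nets. Call a ball
`B(x, t_k)` good if `|f|_{α,B(x,t_k)} (2 t_k)^α ≤ ρ`; its image then has diameter at most `ρ`.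
Each point of `E` is covered by a good ball at the first level where it lies in one, and at a
level `k + 1` such a ball lies within `3 t_{k+1}` of a bad ball of level `k`. By Chebyshev's
inequality the `p`-summability of the Hölder coefficients bounds the number of bad balls of level
`k` by `≲ t_k^{αp} ρ^{-p}`, so by doubling level `k + 1` needs `≲ min (t_k^{-d}, t_k^{αp} ρ^{-p})`
balls for any `d > dim_B E`. The balanced interpolation of the two bounds is `≲ ρ^{-pd/(αp+d)}`,
independently of `k`, and only `O(log (1/ρ))` levels are needed before every ball is good.
-/

open Filter Metric Set Topology MeasureTheory Bornology
open scoped ENNReal NNReal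

noncomputable section

/-- `coverNum E r` is the smallest number of sets of diameter at most `r`
needed to cover `E` (`∞` if no finite cover exists). -/
def coverNum {X : Type*} [MetricSpace X] (E : Set X) (r : ℝ) : ℝ≥0∞ :=
  ⨅ (n : ℕ) (_ : ∃ U : Fin n → Set X,
      (∀ i, EMetric.diam (U i) ≤ ENNReal.ofReal r) ∧ E ⊆ ⋃ i, U i), (n : ℝ≥0∞)

open scoped Classical in
/-- The upper Minkowski (box-counting) dimension:
`dim_B E = limsup_{r → 0⁺} log N(E,r) / log (1/r)`. -/
def dimB {X : Type*} [MetricSpace X] (E : Set X) : EReal :=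
  Filter.limsup
    (fun r : ℝ =>
      if coverNum E r = ⊤ then (⊤ : EReal)
      else ((Real.log (coverNum E r).toReal / Real.log (1 / r) : ℝ) : EReal))
    (𝓝[>] (0:ℝ))

/-- `X` is doubling with constant `Cd`: every ball of radius `2r` can be covered
by at most `Cd` balls of radius `r`. -/
def DoublingConst (X : Type*) [MetricSpace X] (Cd : ℝ) : Prop :=
  ∀ (x : X) (r : ℝ), 0 < r → ∃ t : Finset X,
    (t.card : ℝ) ≤ Cd ∧ Metric.ball x (2 * r) ⊆ ⋃ y ∈ t, Metric.ball y r

/-- A doubling metric space. -/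
def DoublingSpace (X : Type*) [MetricSpace X] : Prop :=
  ∃ Cd : ℝ, 1 ≤ Cd ∧ DoublingConst X Cd

/-- The `α`-Hölder coefficient `|f|_{α,B}` of `f` on the set `B`. -/
def holderCoef {X Y : Type*} [MetricSpace X] [MetricSpace Y]
    (α : ℝ) (f : X → Y) (B : Set X) : ℝ≥0∞ :=
  ⨆ (x ∈ B) (y ∈ B) (_ : x ≠ y), ENNReal.ofReal (dist (f x) (f y) / dist x y ^ α)

/-- `f : X → Y` is `(p,α)`-compactly Hölder: for every compact `E ⊆ X` and every
`ε ∈ (0,1)` there are `rE > 0` and `CE > 0` such that for every at most countable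
collection of balls of common radius `r < rE` covering `E` whose `ε`-shrunken balls
are pairwise disjoint, the `p`-sum of the `α`-Hölder coefficients of `f` on the
balls is at most `CE`. -/
def CompactlyHolder {X Y : Type*} [MetricSpace X] [MetricSpace Y]
    (p α : ℝ) (f : X → Y) : Prop :=
  ∀ E : Set X, IsCompact E → ∀ ε ∈ Set.Ioo (0:ℝ) 1,
    ∃ rE > (0:ℝ), ∃ CE > (0:ℝ),
      ∀ (I : Type) (_ : Countable I) (c : I → X) (r : ℝ), 0 < r → r < rE →
        (E ⊆ ⋃ i, Metric.ball (c i) r) →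
        (Pairwise fun i j => Disjoint (Metric.ball (c i) (ε * r)) (Metric.ball (c j) (ε * r))) →
        ∑' i, holderCoef α f (Metric.ball (c i) r) ^ p ≤ ENNReal.ofReal CE

section CoveringNumber

variable {X : Type*} [MetricSpace X] {E : Set X} {r t : ℝ}

lemma exists_nat_eq_coverNum (h : coverNum E r ≠ ⊤) : ∃ n : ℕ, coverNum E r = n := by
  classical
  have hex : ∃ n : ℕ, ∃ U : Fin n → Set X,
      (∀ i, ediam (U i) ≤ ENNReal.ofReal r) ∧ E ⊆ ⋃ i, U i := by
    by_contra hne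
    exact h (iInf₂_eq_top.2 fun n hn => absurd ⟨n, hn⟩ hne)
  refine ⟨Nat.find hex, le_antisymm (iInf₂_le (Nat.find hex) (Nat.find_spec hex)) ?_⟩
  exact le_iInf₂ fun n hn => by exact_mod_cast Nat.find_min' hex hn

lemma coverNum_le_card {ι : Type*} (s : Finset ι) (U : ι → Set X)
    (hU : ∀ i ∈ s, ediam (U i) ≤ ENNReal.ofReal r) (hE : E ⊆ ⋃ i ∈ s, U i) :
    coverNum E r ≤ s.card := by
  refine iInf₂_le_of_le s.card ⟨fun i => U (s.equivFin.symm i), fun i => hU _ (s.equivFin.symm i).2,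
    fun x hx => ?_⟩ le_rfl
  obtain ⟨i, hi, hxi⟩ := mem_iUnion₂.1 (hE hx)
  exact mem_iUnion.2 ⟨s.equivFin ⟨i, hi⟩, by simpa using hxi⟩

lemma card_le_coverNum_of_pairwise_le_dist {s : Finset X} (hsE : ↑s ⊆ E)
    (hs : (s : Set X).Pairwise (t ≤ dist · ·)) (hr : 0 ≤ r) (hrt : r < t) :
    (s.card : ℝ≥0∞) ≤ coverNum E r := by
  classical
  refine le_iInf₂ fun n ⟨U, hU, hcov⟩ => ?_
  have hsub : s ⊆ Finset.univ.biUnion fun i : Fin n => s.filter (· ∈ U i) := by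
    intro x hx
    obtain ⟨i, hi⟩ := mem_iUnion.1 (hcov (hsE hx))
    exact Finset.mem_biUnion.2 ⟨i, Finset.mem_univ _, Finset.mem_filter.2 ⟨hx, hi⟩⟩
  have hle : ∀ i ∈ Finset.univ, (s.filter (· ∈ U i)).card ≤ 1 := by
    refine fun i _ => Finset.card_le_one.2 fun x hx y hy => by_contra fun hxy => ?_
    rw [Finset.mem_filter] at hx hy
    have hxy' := (edist_le_ofReal hr).1 ((edist_le_ediam_of_mem hx.2 hy.2).trans (hU i))
    linarith [hs hx.1 hy.1 hxy]
  have := (Finset.card_le_card hsub).trans (Finset.card_biUnion_le_card_mul _ _ 1 hle)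
  simp only [Finset.card_univ, Fintype.card_fin, mul_one] at this
  exact_mod_cast this

def IsNet (E : Set X) (t : ℝ) (s : Finset X) : Prop :=
  ↑s ⊆ E ∧ (s : Set X).Pairwise (t ≤ dist · ·) ∧ E ⊆ ⋃ x ∈ s, ball x t

lemma exists_isNet (hr : 0 ≤ r) (hrt : r < t) (h : coverNum E r ≠ ⊤) : ∃ s, IsNet E t s := by
  classical
  obtain ⟨n, hn⟩ := exists_nat_eq_coverNum h
  let P : ℕ → Prop := fun m =>
    ∃ s : Finset X, ↑s ⊆ E ∧ (s : Set X).Pairwise (t ≤ dist · ·) ∧ s.card = m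
  have hP : ∀ {m}, P m → m ≤ n := by
    rintro _ ⟨s, hsE, hs, rfl⟩
    exact_mod_cast hn ▸ card_le_coverNum_of_pairwise_le_dist hsE hs hr hrt
  obtain ⟨s, hsE, hs, hcard⟩ : P (Nat.findGreatest P n) :=
    Nat.findGreatest_spec (Nat.zero_le n) ⟨∅, by simp⟩
  refine ⟨s, hsE, hs, fun y hy => by_contra fun hy' => ?_⟩
  have hfar : ∀ x ∈ s, t ≤ dist y x := fun x hx =>
    not_lt.1 fun h => hy' (mem_iUnion₂.2 ⟨x, hx, h⟩)
  have hys : y ∉ s := fun h => by linarith [hfar y h, dist_self y]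
  have hins : P (s.card + 1) := by
    refine ⟨insert y s, ?_, ?_, Finset.card_insert_of_notMem hys⟩
    · simpa [Finset.coe_insert] using insert_subset hy hsE
    · rw [Finset.coe_insert, pairwise_insert]
      exact ⟨hs, fun x hx _ => ⟨hfar x hx, dist_comm x y ▸ hfar x hx⟩⟩
  have := Nat.le_findGreatest (hP hins) hins
  omega

end CoveringNumber

section Dimension

variable {X : Type*} [MetricSpace X] {E : Set X}

lemma dimB_nonneg (E : Set X) : 0 ≤ dimB E := by
  refine le_limsup_of_frequently_le (Eventually.frequently ?_)
  filter_upwards [Ioo_mem_nhdsGT one_pos] with r hr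
  split_ifs with htop
  · exact le_top
  · obtain ⟨n, hn⟩ := exists_nat_eq_coverNum htop
    rw [hn, ENNReal.toReal_natCast]
    exact EReal.coe_nonneg.2 (div_nonneg (Real.log_natCast_nonneg n)
      (Real.log_nonneg (one_le_one_div hr.1 hr.2.le)))

lemma eventually_coverNum_le_rpow_of_dimB_lt {d : ℝ} (h : dimB E < d) :
    ∀ᶠ r in 𝓝[>] 0, coverNum E r ≤ ENNReal.ofReal (r ^ (-d)) := by
  filter_upwards [eventually_lt_of_limsup_lt h, Ioo_mem_nhdsGT one_pos] with r hr ⟨hr₀, hr₁⟩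
  split_ifs at hr with htop
  · exact absurd hr not_top_lt
  obtain ⟨n, hn⟩ := exists_nat_eq_coverNum htop
  rw [hn, ENNReal.toReal_natCast, EReal.coe_lt_coe_iff,
    div_lt_iff₀ (Real.log_pos (one_lt_one_div hr₀ hr₁)), one_div, Real.log_inv] at hr
  rw [hn, ← ENNReal.ofReal_natCast]
  refine ENNReal.ofReal_le_ofReal ?_
  rcases n.eq_zero_or_pos with rfl | hn₀
  · simpa using (Real.rpow_pos_of_pos hr₀ _).le
  · rw [← Real.log_le_log_iff (Nat.cast_pos.2 hn₀) (by positivity), Real.log_rpow hr₀]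
    linarith

lemma dimB_le_of_eventually_coverNum_le {A D : ℝ} (hA : 0 < A) (hD : 0 ≤ D)
    (h : ∀ᶠ ρ in 𝓝[>] 0, coverNum E ρ ≤ ENNReal.ofReal (A * ρ ^ (-D))) : dimB E ≤ D := by
  refine EReal.le_of_forall_lt_iff_le.1 fun c hc => ?_
  have hcD : 0 < c - D := sub_pos.2 (EReal.coe_lt_coe_iff.1 hc)
  have hL : Tendsto (fun ρ : ℝ => Real.log (1 / ρ)) (𝓝[>] 0) atTop := by
    simpa only [one_div, Real.log_inv, Function.comp_def] using
      tendsto_neg_atBot_atTop.comp Real.tendsto_log_nhdsGT_zero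
  refine limsup_le_of_le (by isBoundedDefault) ?_
  filter_upwards [h, hL.eventually_ge_atTop (Real.log A / (c - D)), hL.eventually_gt_atTop 0,
    self_mem_nhdsWithin] with ρ hρ hLA hL₀ (hρ₀ : 0 < ρ)
  have hfin : coverNum E ρ ≠ ⊤ := ne_top_of_le_ne_top ENNReal.ofReal_ne_top hρ
  obtain ⟨n, hn⟩ := exists_nat_eq_coverNum hfin
  rw [if_neg hfin, hn, ENNReal.toReal_natCast, EReal.coe_le_coe_iff, div_le_iff₀ hL₀]
  rw [hn, ← ENNReal.ofReal_natCast, ENNReal.ofReal_le_ofReal_iff (by positivity)] at hρ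
  rw [div_le_iff₀ hcD] at hLA
  rcases n.eq_zero_or_pos with rfl | hn₀
  · simpa using mul_nonneg (by linarith : 0 ≤ c) hL₀.le
  calc Real.log n ≤ Real.log (A * ρ ^ (-D)) := Real.log_le_log (by positivity) hρ
    _ = Real.log A + D * Real.log (1 / ρ) := by
        rw [Real.log_mul hA.ne' (by positivity), Real.log_rpow hρ₀, one_div, Real.log_inv]
        ring
    _ ≤ c * Real.log (1 / ρ) := by linarith

/-- A factor `log (1 / ρ)` is absorbed by `ρ ^ (-η)` for every `η > 0`. -/
lemma dimB_le_of_eventually_coverNum_le_log_mul {a b D : ℝ} (ha : 0 < a) (hb : 0 ≤ b) (hD : 0 ≤ D)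
    (h : ∀ᶠ ρ in 𝓝[>] 0, coverNum E ρ ≤ ENNReal.ofReal ((a + b * Real.log (1 / ρ)) * ρ ^ (-D))) :
    dimB E ≤ D := by
  refine EReal.le_of_forall_lt_iff_le.1 fun c hc => ?_
  have hcD : 0 < c - D := sub_pos.2 (EReal.coe_lt_coe_iff.1 hc)
  refine dimB_le_of_eventually_coverNum_le (A := a + b / (c - D))
    (add_pos_of_pos_of_nonneg ha (div_nonneg hb hcD.le)) (by linarith) ?_
  filter_upwards [h, Ioo_mem_nhdsGT one_pos] with ρ hρ ⟨hρ₀, hρ₁⟩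
  refine hρ.trans (ENNReal.ofReal_le_ofReal ?_)
  have hlog : Real.log (1 / ρ) ≤ ρ ^ (-(c - D)) / (c - D) := by
    have := Real.log_le_rpow_div (x := 1 / ρ) (by positivity) hcD
    rwa [one_div, Real.inv_rpow hρ₀.le, ← Real.rpow_neg hρ₀.le, ← one_div] at this
  have hmono : ρ ^ (-D) ≤ ρ ^ (-c) :=
    Real.rpow_le_rpow_of_exponent_ge hρ₀ hρ₁.le (by linarith)
  calc (a + b * Real.log (1 / ρ)) * ρ ^ (-D)
      ≤ (a + b * (ρ ^ (-(c - D)) / (c - D))) * ρ ^ (-D) := by gcongr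
    _ = a * ρ ^ (-D) + b / (c - D) * (ρ ^ (-(c - D)) * ρ ^ (-D)) := by ring
    _ = a * ρ ^ (-D) + b / (c - D) * ρ ^ (-c) := by rw [← Real.rpow_add hρ₀]; ring_nf
    _ ≤ (a + b / (c - D)) * ρ ^ (-c) := by nlinarith

end Dimension

lemma DoublingConst.card_le_of_subset_biUnion_ball {X : Type*} [MetricSpace X] {Cd t : ℝ}
    (hD : DoublingConst X Cd) (hCd : 0 ≤ Cd) (ht : 0 < t) (m : ℕ) {Z s : Finset X}
    (hs : (s : Set X).Pairwise (t ≤ dist · ·)) (hsZ : ↑s ⊆ ⋃ z ∈ Z, ball z (2 ^ m * (t / 2))) :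
    (s.card : ℝ) ≤ Cd ^ m * Z.card := by
  classical
  induction m generalizing Z with
  | zero =>
    have hsub : s ⊆ Z.biUnion fun z => s.filter (· ∈ ball z (t / 2)) := by
      intro x hx
      obtain ⟨z, hz, hxz⟩ := mem_iUnion₂.1 (hsZ hx)
      exact Finset.mem_biUnion.2 ⟨z, hz, Finset.mem_filter.2 ⟨hx, by simpa using hxz⟩⟩
    have hle : ∀ z ∈ Z, (s.filter (· ∈ ball z (t / 2))).card ≤ 1 := by
      refine fun z _ => Finset.card_le_one.2 fun x hx y hy => by_contra fun hxy => ?_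
      rw [Finset.mem_filter, mem_ball] at hx hy
      linarith [hs hx.1 hy.1 hxy, dist_triangle_right x y z]
    have := (Finset.card_le_card hsub).trans (Finset.card_biUnion_le_card_mul _ _ 1 hle)
    simpa using (Nat.cast_le (α := ℝ)).2 this
  | succ m ih =>
    choose W hWcard hW using fun z : X => hD z (2 ^ m * (t / 2)) (by positivity)
    have hsW : ↑s ⊆ ⋃ w ∈ Z.biUnion W, ball w (2 ^ m * (t / 2)) := by
      intro x hx
      obtain ⟨z, hz, hxz⟩ := mem_iUnion₂.1 (hsZ hx)
      rw [pow_succ, mul_comm _ 2, mul_assoc] at hxz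
      obtain ⟨w, hw, hxw⟩ := mem_iUnion₂.1 (hW z hxz)
      exact mem_iUnion₂.2 ⟨w, Finset.mem_biUnion.2 ⟨z, hz, hw⟩, hxw⟩
    have hcard : ((Z.biUnion W).card : ℝ) ≤ Cd * Z.card := by
      calc ((Z.biUnion W).card : ℝ) ≤ ∑ z ∈ Z, ((W z).card : ℝ) := by
            exact_mod_cast Finset.card_biUnion_le
        _ ≤ ∑ _z ∈ Z, Cd := Finset.sum_le_sum fun z _ => hWcard z
        _ = Cd * Z.card := by rw [Finset.sum_const, nsmul_eq_mul, mul_comm]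
    calc (s.card : ℝ) ≤ Cd ^ m * (Z.biUnion W).card := ih hsW
      _ ≤ Cd ^ m * (Cd * Z.card) := by gcongr
      _ = Cd ^ (m + 1) * Z.card := by ring

section Holder

variable {X Y : Type*} [MetricSpace X] [MetricSpace Y] {f : X → Y} {α p ρ t C : ℝ}

lemma ediam_image_ball_le (hα : 0 ≤ α) (x : X) :
    ediam (f '' ball x t) ≤ holderCoef α f (ball x t) * ENNReal.ofReal ((2 * t) ^ α) := by
  refine ediam_le ?_
  rintro _ ⟨u, hu, rfl⟩ _ ⟨v, hv, rfl⟩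
  rcases eq_or_ne u v with rfl | huv
  · simp
  have huv' : 0 < dist u v := dist_pos.2 huv
  have h2t : dist u v ≤ 2 * t := by
    linarith [mem_ball.1 hu, mem_ball.1 hv, dist_triangle_right u v x]
  calc edist (f u) (f v)
      = ENNReal.ofReal (dist (f u) (f v) / dist u v ^ α * dist u v ^ α) := by
        rw [div_mul_cancel₀ _ (by positivity), edist_dist]
    _ ≤ holderCoef α f (ball x t) * ENNReal.ofReal ((2 * t) ^ α) := by
        rw [ENNReal.ofReal_mul (by positivity)]
        gcongr
        exact le_iSup₂_of_le u hu (le_iSup₂_of_le v hv (le_iSup_of_le huv le_rfl))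

def IsGoodBall (f : X → Y) (α ρ t : ℝ) (x : X) : Prop :=
  holderCoef α f (ball x t) ≤ ENNReal.ofReal (ρ / (2 * t) ^ α)

lemma IsGoodBall.ediam_image_le (hα : 0 ≤ α) (ht : 0 < t) {x : X} (hx : IsGoodBall f α ρ t x) :
    ediam (f '' ball x t) ≤ ENNReal.ofReal ρ := by
  have hpos : 0 < (2 * t) ^ α := by positivity
  calc ediam (f '' ball x t) ≤ holderCoef α f (ball x t) * ENNReal.ofReal ((2 * t) ^ α) :=
        ediam_image_ball_le hα x
    _ ≤ ENNReal.ofReal (ρ / (2 * t) ^ α) * ENNReal.ofReal ((2 * t) ^ α) := by gcongr; exact hx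
    _ = ENNReal.ofReal ρ := by rw [← ENNReal.ofReal_mul' hpos.le, div_mul_cancel₀ _ hpos.ne']

/-- For the compact set `∅` the covering condition is void, so the bound holds for every
separated family of centres. -/
lemma CompactlyHolder.exists_sum_rpow_le (hf : CompactlyHolder p α f) :
    ∃ r₀ > (0 : ℝ), ∃ C > (0 : ℝ), ∀ t, 0 < t → t < r₀ → ∀ s : Finset X,
      (s : Set X).Pairwise (t ≤ dist · ·) →
        ∑ x ∈ s, holderCoef α f (ball x t) ^ p ≤ ENNReal.ofReal C := by
  obtain ⟨r₀, hr₀, C, hC, hsum⟩ := hf ∅ isCompact_empty (1 / 2) ⟨by norm_num, by norm_num⟩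
  refine ⟨r₀, hr₀, C, hC, fun t ht htr s hs => ?_⟩
  set c : Fin s.card → X := fun i => s.equivFin.symm i
  have hdisj : Pairwise fun i j => Disjoint (ball (c i) (1 / 2 * t)) (ball (c j) (1 / 2 * t)) := by
    refine fun i j hij => ball_disjoint_ball ?_
    have hne : c i ≠ c j := fun h => hij (s.equivFin.symm.injective (Subtype.ext h))
    linarith [hs (s.equivFin.symm i).2 (s.equivFin.symm j).2 hne]
  have := hsum (Fin s.card) inferInstance c t ht htr (empty_subset _) hdisj
  rwa [tsum_fintype, Equiv.sum_comp s.equivFin.symm (fun x => holderCoef α f (ball (x : X) t) ^ p),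
    Finset.sum_coe_sort s (fun x => holderCoef α f (ball x t) ^ p)] at this

lemma card_filter_lt_le_of_sum_rpow_le {ι : Type*} (s : Finset ι) (g : ι → ℝ≥0∞) {a : ℝ}
    (hp : 0 < p) (ha : 0 < a) (hC : 0 ≤ C) (hsum : ∑ i ∈ s, g i ^ p ≤ ENNReal.ofReal C) :
    ((s.filter fun i => ENNReal.ofReal a < g i).card : ℝ) ≤ C / a ^ p := by
  have hle : (s.filter fun i => ENNReal.ofReal a < g i).card • ENNReal.ofReal (a ^ p) ≤
      ENNReal.ofReal C := by
    refine (Finset.card_nsmul_le_sum _ _ _ fun i hi => ?_).trans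
      ((Finset.sum_le_sum_of_subset (Finset.filter_subset _ s)).trans hsum)
    rw [← ENNReal.ofReal_rpow_of_nonneg ha.le hp.le]
    exact ENNReal.rpow_le_rpow (Finset.mem_filter.1 hi).2.le hp.le
  rw [nsmul_eq_mul, ← ENNReal.ofReal_natCast, ← ENNReal.ofReal_mul (by positivity),
    ENNReal.ofReal_le_ofReal_iff hC] at hle
  rwa [le_div_iff₀ (by positivity)]

lemma isGoodBall_of_rpow_le (hp : 0 < p) (hC : 0 ≤ C) (ht : 0 < t) {x : X}
    (hx : holderCoef α f (ball x t) ^ p ≤ ENNReal.ofReal C) (hρ : C ^ (1 / p) * (2 * t) ^ α ≤ ρ) :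
    IsGoodBall f α ρ t x := by
  have hx' : holderCoef α f (ball x t) ≤ ENNReal.ofReal (C ^ (1 / p)) := by
    rwa [← ENNReal.rpow_le_rpow_iff hp, ENNReal.ofReal_rpow_of_nonneg (by positivity) hp.le,
      ← Real.rpow_mul hC, one_div_mul_cancel hp.ne', Real.rpow_one]
  exact hx'.trans (ENNReal.ofReal_le_ofReal ((le_div_iff₀ (by positivity)).2 hρ))

end Holder

section GoodCenters

variable {X : Type*} [MetricSpace X] (S : ℕ → Finset X) (t : ℕ → ℝ) (P : ℕ → X → Prop)

open Classical in
def goodCenters : ℕ → Finset X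
  | 0 => (S 0).filter (P 0)
  | k + 1 => (S (k + 1)).filter fun x =>
      P (k + 1) x ∧ ∃ z ∈ S k, ¬ P k z ∧ dist x z < 3 * t (k + 1)

variable {S t P}

lemma goodCenters_subset (k : ℕ) : goodCenters S t P k ⊆ S k := by
  classical
  cases k <;> exact Finset.filter_subset _ _

lemma of_mem_goodCenters {k : ℕ} {x : X} (hx : x ∈ goodCenters S t P k) : P k x := by
  classical
  cases k
  · exact (Finset.mem_filter.1 hx).2
  · exact (Finset.mem_filter.1 hx).2.1

/-- A point is covered at the first level at which it lies in a good ball; if that level is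
`k + 1`, the ball of level `k` containing the point is bad. -/
lemma subset_biUnion_goodCenters {E : Set X} (hcov : ∀ k, E ⊆ ⋃ x ∈ S k, ball x (t k))
    (ht : ∀ k, t k = 2 * t (k + 1)) {K : ℕ} (hK : ∀ x ∈ S K, P K x) :
    E ⊆ ⋃ k ∈ Finset.range (K + 1), ⋃ x ∈ goodCenters S t P k, ball x (t k) := by
  classical
  intro y hy
  have hyK : ∃ x ∈ S K, y ∈ ball x (t K) ∧ P K x := by
    obtain ⟨x, hx, hyx⟩ := mem_iUnion₂.1 (hcov K hy)
    exact ⟨x, hx, hyx, hK x hx⟩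
  have hex : ∃ j, ∃ x ∈ S j, y ∈ ball x (t j) ∧ P j x := ⟨K, hyK⟩
  obtain ⟨x, hx, hyx, hPx⟩ := Nat.find_spec hex
  have hmin : ∀ i < Nat.find hex, ∀ z ∈ S i, y ∈ ball z (t i) → ¬ P i z :=
    fun i hi z hz hyz hPz => Nat.find_min hex hi ⟨z, hz, hyz, hPz⟩
  have hxG : x ∈ goodCenters S t P (Nat.find hex) := by
    revert hx hyx hPx hmin
    cases Nat.find hex with
    | zero => exact fun hx _ hPx _ => Finset.mem_filter.2 ⟨hx, hPx⟩
    | succ i =>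
      intro hx hyx hPx hmin
      obtain ⟨z, hz, hyz⟩ := mem_iUnion₂.1 (hcov i hy)
      refine Finset.mem_filter.2 ⟨hx, hPx, z, hz, hmin i i.lt_succ_self z hz hyz, ?_⟩
      linarith [ht i, dist_triangle x y z, mem_ball'.1 hyx, mem_ball.1 hyz]
  exact mem_iUnion₂.2 ⟨Nat.find hex,
    Finset.mem_range.2 (Nat.lt_succ_of_le (Nat.find_min' hex hyK)), mem_iUnion₂.2 ⟨x, hxG, hyx⟩⟩

open Classical in
lemma card_goodCenters_succ_le {Cd : ℝ} (hD : DoublingConst X Cd) (hCd : 0 ≤ Cd) {k : ℕ}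
    (ht : 0 < t (k + 1)) (hsep : (S (k + 1) : Set X).Pairwise (t (k + 1) ≤ dist · ·)) :
    ((goodCenters S t P (k + 1)).card : ℝ) ≤ Cd ^ 3 * ((S k).filter (¬ P k ·)).card := by
  refine hD.card_le_of_subset_biUnion_ball hCd ht 3
    (hsep.mono (Finset.coe_subset.2 (goodCenters_subset _))) fun x hx => ?_
  obtain ⟨-, -, z, hz, hPz, hxz⟩ := Finset.mem_filter.1 hx
  exact mem_iUnion₂.2 ⟨z, Finset.mem_filter.2 ⟨hz, hPz⟩, by rw [mem_ball]; linarith⟩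

end GoodCenters

lemma min_le_rpow_mul_rpow {x y θ : ℝ} (hx : 0 ≤ x) (hy : 0 ≤ y) (hθ₀ : 0 ≤ θ) (hθ₁ : θ ≤ 1) :
    min x y ≤ x ^ θ * y ^ (1 - θ) := by
  rcases le_or_gt (min x y) 0 with h | h
  · exact h.trans (by positivity)
  calc min x y = min x y ^ θ * min x y ^ (1 - θ) := by
        rw [← Real.rpow_add h, add_sub_cancel, Real.rpow_one]
    _ ≤ x ^ θ * y ^ (1 - θ) := by
        gcongr
        exacts [min_le_left x y, min_le_right x y]

lemma min_mul_rpow_le {a b c s d e θ : ℝ} (ha : 0 ≤ a) (hb : 0 ≤ b) (hc : 0 ≤ c) (hs : 0 < s)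
    (hθ₀ : 0 ≤ θ) (hθ₁ : θ ≤ 1) (hθ : θ * d = (1 - θ) * e) :
    min (a * s ^ (-d)) (b * s ^ e * c) ≤ a ^ θ * b ^ (1 - θ) * c ^ (1 - θ) := by
  have hscale : (s ^ (-d)) ^ θ * (s ^ e) ^ (1 - θ) = 1 := by
    rw [← Real.rpow_mul hs.le, ← Real.rpow_mul hs.le, ← Real.rpow_add hs]
    convert Real.rpow_zero s using 2
    linarith
  calc min (a * s ^ (-d)) (b * s ^ e * c)
      ≤ (a * s ^ (-d)) ^ θ * (b * s ^ e * c) ^ (1 - θ) :=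
        min_le_rpow_mul_rpow (by positivity) (by positivity) hθ₀ hθ₁
    _ = a ^ θ * b ^ (1 - θ) * c ^ (1 - θ) * ((s ^ (-d)) ^ θ * (s ^ e) ^ (1 - θ)) := by
        rw [Real.mul_rpow ha (by positivity), Real.mul_rpow (by positivity) hc,
          Real.mul_rpow hb (by positivity)]
        ring
    _ = a ^ θ * b ^ (1 - θ) * c ^ (1 - θ) := by rw [hscale, mul_one]

lemma exists_nat_le_mul_rpow_two_pow {c α ρ : ℝ} (hc : 0 < c) (hα : 0 < α) (hρ : 0 < ρ)
    (hρ₁ : ρ ≤ 1) : ∃ K : ℕ, c ≤ ρ * ((2 : ℝ) ^ K) ^ α ∧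
      (K : ℝ) ≤ (|Real.log c| + Real.log (1 / ρ)) / (α * Real.log 2) + 1 := by
  have hlog2 : 0 < α * Real.log 2 := mul_pos hα (Real.log_pos one_lt_two)
  have hlog : Real.log (c / ρ) = Real.log c + Real.log (1 / ρ) := by
    rw [div_eq_mul_one_div, Real.log_mul hc.ne' (by positivity)]
  set x := Real.log (c / ρ) / (α * Real.log 2)
  refine ⟨⌈max x 0⌉₊, ?_, ?_⟩
  · have hx : x ≤ ⌈max x 0⌉₊ := (le_max_left _ _).trans (Nat.le_ceil _)
    rw [div_le_iff₀ hlog2] at hx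
    rw [← Real.rpow_natCast, ← Real.rpow_mul zero_le_two, ← div_le_iff₀' hρ,
      Real.rpow_def_of_pos two_pos, ← Real.exp_log (div_pos hc hρ)]
    exact Real.exp_le_exp.2 (by linarith)
  · have hmax : max x 0 ≤ (|Real.log c| + Real.log (1 / ρ)) / (α * Real.log 2) := by
      have hlogρ : 0 ≤ Real.log (1 / ρ) := Real.log_nonneg (one_le_one_div hρ hρ₁)
      refine max_le (div_le_div_of_nonneg_right ?_ hlog2.le) (by positivity)
      linarith [le_abs_self (Real.log c)]
    linarith [Nat.ceil_lt_add_one (le_max_right x 0)]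
section Multiscale

variable {X Y : Type*} [MetricSpace X] [MetricSpace Y] {f : X → Y} {α p ρ C d Cd : ℝ}
  {E : Set X} {S : ℕ → Finset X} {t : ℕ → ℝ}

lemma coverNum_image_le_sum_card_goodCenters (hα : 0 ≤ α) (htpos : ∀ k, 0 < t k)
    (ht : ∀ k, t k = 2 * t (k + 1)) (hcov : ∀ k, E ⊆ ⋃ x ∈ S k, ball x (t k)) {K : ℕ}
    (hK : ∀ x ∈ S K, IsGoodBall f α ρ (t K) x) :
    coverNum (f '' E) ρ ≤
      ∑ k ∈ Finset.range (K + 1), ((goodCenters S t fun k => IsGoodBall f α ρ (t k)) k).card := by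
  set G := goodCenters S t fun k => IsGoodBall f α ρ (t k)
  calc coverNum (f '' E) ρ ≤ ((Finset.range (K + 1)).sigma G).card := by
        refine coverNum_le_card _ (fun q => f '' ball q.2 (t q.1)) (fun q hq => ?_) ?_
        · exact (of_mem_goodCenters (Finset.mem_sigma.1 hq).2).ediam_image_le hα (htpos _)
        · rintro _ ⟨y, hy, rfl⟩
          obtain ⟨k, hk, hyk⟩ := mem_iUnion₂.1
            (subset_biUnion_goodCenters (P := fun k => IsGoodBall f α ρ (t k)) hcov ht hK hy)
          obtain ⟨x, hx, hyx⟩ := mem_iUnion₂.1 hyk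
          exact mem_iUnion₂.2 ⟨⟨k, x⟩, Finset.mem_sigma.2 ⟨hk, hx⟩, mem_image_of_mem f hyx⟩
    _ = _ := by rw [Finset.card_sigma]

/-- Level `k + 1` uses few balls: at most the size of the net, and at most `Cd ^ 3` times the
number of bad balls of level `k`, which Chebyshev's inequality bounds by the `p`-sum. -/
lemma card_goodCenters_succ_le_rpow {θ : ℝ} (hD : DoublingConst X Cd) (hCd : 0 ≤ Cd) (hp : 0 < p)
    (hρ : 0 < ρ) (hC : 0 ≤ C) (hθ₀ : 0 ≤ θ) (hθ₁ : θ ≤ 1)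
    (hθ : θ * d = (1 - θ) * (α * p)) {k : ℕ} (htpos : 0 < t (k + 1)) (ht : t k = 2 * t (k + 1))
    (hsep : (S (k + 1) : Set X).Pairwise (t (k + 1) ≤ dist · ·))
    (hcard : ((S (k + 1)).card : ℝ) ≤ (t (k + 1) / 2) ^ (-d))
    (hsum : ∑ x ∈ S k, holderCoef α f (ball x (t k)) ^ p ≤ ENNReal.ofReal C) :
    ((goodCenters S t (fun k => IsGoodBall f α ρ (t k)) (k + 1)).card : ℝ) ≤
      (2 ^ d) ^ θ * (Cd ^ 3 * C * 4 ^ (α * p)) ^ (1 - θ) * ρ ^ (-(p * (1 - θ))) := by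
  classical
  set G := goodCenters S t (fun k => IsGoodBall f α ρ (t k)) (k + 1)
  set s := t (k + 1)
  have hbad : (((S k).filter fun x => ¬ IsGoodBall f α ρ (t k) x).card : ℝ) ≤
      C / (ρ / (2 * t k) ^ α) ^ p := by
    simpa only [IsGoodBall, not_le] using
      card_filter_lt_le_of_sum_rpow_le (S k) _ hp (by rw [ht]; positivity) hC hsum
  have hnet : (G.card : ℝ) ≤ 2 ^ d * s ^ (-d) := by
    refine (Nat.cast_le.2 (Finset.card_le_card (goodCenters_subset _))).trans (hcard.trans_eq ?_)
    rw [Real.div_rpow htpos.le zero_le_two, Real.rpow_neg zero_le_two, div_inv_eq_mul, mul_comm]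
  have hdoubling : (G.card : ℝ) ≤ Cd ^ 3 * C * 4 ^ (α * p) * s ^ (α * p) * ρ ^ (-p) := by
    calc (G.card : ℝ) ≤ Cd ^ 3 * ((S k).filter fun x => ¬ IsGoodBall f α ρ (t k) x).card :=
          card_goodCenters_succ_le hD hCd htpos hsep
      _ ≤ Cd ^ 3 * (C / (ρ / (2 * t k) ^ α) ^ p) := by gcongr
      _ = Cd ^ 3 * C * 4 ^ (α * p) * s ^ (α * p) * ρ ^ (-p) := by
          rw [ht, show 2 * (2 * s) = 4 * s by ring, Real.div_rpow hρ.le (by positivity),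
            ← Real.rpow_mul (by positivity), Real.mul_rpow (by norm_num) htpos.le,
            Real.rpow_neg hρ.le]
          field_simp
  calc (G.card : ℝ) ≤ min (2 ^ d * s ^ (-d)) (Cd ^ 3 * C * 4 ^ (α * p) * s ^ (α * p) * ρ ^ (-p)) :=
        le_min hnet hdoubling
    _ ≤ (2 ^ d) ^ θ * (Cd ^ 3 * C * 4 ^ (α * p)) ^ (1 - θ) * (ρ ^ (-p)) ^ (1 - θ) :=
        min_mul_rpow_le (by positivity) (by positivity) (by positivity) htpos hθ₀ hθ₁ hθ
    _ = _ := by rw [← Real.rpow_mul hρ.le, neg_mul]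

lemma coverNum_image_le_of_forall_isGoodBall {θ : ℝ} (hD : DoublingConst X Cd) (hCd : 0 ≤ Cd)
    (hα : 0 ≤ α) (hp : 0 < p) (hρ : 0 < ρ) (hρ₁ : ρ ≤ 1) (hC : 0 ≤ C) (hθ₀ : 0 ≤ θ) (hθ₁ : θ ≤ 1)
    (hθ : θ * d = (1 - θ) * (α * p)) (htpos : ∀ k, 0 < t k) (ht : ∀ k, t k = 2 * t (k + 1))
    (hS : ∀ k, IsNet E (t k) (S k)) (hcard : ∀ k, ((S k).card : ℝ) ≤ (t k / 2) ^ (-d))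
    (hsum : ∀ k, ∑ x ∈ S k, holderCoef α f (ball x (t k)) ^ p ≤ ENNReal.ofReal C) {K : ℕ}
    (hK : ∀ x ∈ S K, IsGoodBall f α ρ (t K) x) :
    coverNum (f '' E) ρ ≤ ENNReal.ofReal (((t 0 / 2) ^ (-d) +
      K * ((2 ^ d) ^ θ * (Cd ^ 3 * C * 4 ^ (α * p)) ^ (1 - θ))) * ρ ^ (-(p * (1 - θ)))) := by
  set A := (2 ^ d) ^ θ * (Cd ^ 3 * C * 4 ^ (α * p)) ^ (1 - θ)
  set G := goodCenters S t fun k => IsGoodBall f α ρ (t k)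
  have hlevel : ∀ k, ((G (k + 1)).card : ℝ) ≤ A * ρ ^ (-(p * (1 - θ))) := fun k =>
    card_goodCenters_succ_le_rpow hD hCd hp hρ hC hθ₀ hθ₁ hθ (htpos _) (ht k) (hS (k + 1)).2.1
      (hcard (k + 1)) (hsum k)
  have hzero : ((G 0).card : ℝ) ≤ (t 0 / 2) ^ (-d) :=
    (Nat.cast_le.2 (Finset.card_le_card (goodCenters_subset 0))).trans (hcard 0)
  have hρD : 1 ≤ ρ ^ (-(p * (1 - θ))) := Real.one_le_rpow_of_pos_of_le_one_of_nonpos hρ hρ₁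
    (neg_nonpos.2 (mul_nonneg hp.le (sub_nonneg.2 hθ₁)))
  refine (coverNum_image_le_sum_card_goodCenters hα htpos ht (fun k => (hS k).2.2) hK).trans ?_
  rw [← ENNReal.ofReal_natCast]
  refine ENNReal.ofReal_le_ofReal ?_
  push_cast
  rw [Finset.sum_range_succ', add_mul, add_comm, mul_assoc]
  gcongr
  · exact hzero.trans (le_mul_of_one_le_right (Real.rpow_nonneg (half_pos (htpos 0)).le _) hρD)
  · exact (Finset.sum_le_sum fun k _ => hlevel k).trans_eq (by simp)

theorem exists_coverNum_image_le (hD : DoublingConst X Cd) (hCd : 0 ≤ Cd) (hα : 0 < α)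
    (hp : 0 < p) (hd : 0 ≤ d) {t₀ : ℝ} (ht₀ : 0 < t₀) (hC : 0 < C)
    (hS : ∀ k, IsNet E (t₀ / 2 ^ k) (S k))
    (hcard : ∀ k, ((S k).card : ℝ) ≤ (t₀ / 2 ^ k / 2) ^ (-d))
    (hsum : ∀ k, ∑ x ∈ S k, holderCoef α f (ball x (t₀ / 2 ^ k)) ^ p ≤ ENNReal.ofReal C) :
    ∃ a b : ℝ, 0 < a ∧ 0 ≤ b ∧ ∀ ρ ∈ Ioo (0 : ℝ) 1, coverNum (f '' E) ρ ≤
      ENNReal.ofReal ((a + b * Real.log (1 / ρ)) * ρ ^ (-(p * d / (α * p + d)))) := by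
  set θ := α * p / (α * p + d)
  have hαpd : 0 < α * p + d := by positivity
  have hθ : θ * d = (1 - θ) * (α * p) := by simp only [θ]; field_simp; ring
  have hpθ : p * (1 - θ) = p * d / (α * p + d) := by simp only [θ]; field_simp; ring
  set A := (2 ^ d) ^ θ * (Cd ^ 3 * C * 4 ^ (α * p)) ^ (1 - θ)
  set c := C ^ (1 / p) * (2 * t₀) ^ α
  set κ := |Real.log c| / (α * Real.log 2) + 1
  have hlog2 : 0 < α * Real.log 2 := mul_pos hα (Real.log_pos one_lt_two)
  refine ⟨(t₀ / 2) ^ (-d) + A * κ, A / (α * Real.log 2), by positivity, by positivity,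
    fun ρ ⟨hρ₀, hρ₁⟩ => ?_⟩
  obtain ⟨K, hKc, hK⟩ := exists_nat_le_mul_rpow_two_pow (c := c) (by positivity) hα hρ₀ hρ₁.le
  have hgood : ∀ x ∈ S K, IsGoodBall f α ρ (t₀ / 2 ^ K) x := fun x hx =>
    isGoodBall_of_rpow_le hp hC.le (by positivity)
      ((Finset.single_le_sum (fun _ _ => zero_le) hx).trans (hsum K))
      (((div_le_iff₀ (by positivity)).2 hKc).trans_eq' (by
        rw [mul_div_assoc', Real.div_rpow (by positivity) (by positivity), mul_div_assoc]))
  refine (coverNum_image_le_of_forall_isGoodBall (t := fun k => t₀ / 2 ^ k) hD hCd hα.le hp hρ₀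
    hρ₁.le hC.le (by positivity) (div_le_one_of_le₀ (by linarith) hαpd.le) hθ
    (fun k => by positivity) (fun k => by rw [pow_succ]; field_simp) hS hcard hsum hgood).trans ?_
  rw [hpθ, pow_zero, div_one]
  refine ENNReal.ofReal_le_ofReal (mul_le_mul_of_nonneg_right ?_ (by positivity))
  have hK' : (K : ℝ) ≤ κ + Real.log (1 / ρ) / (α * Real.log 2) := by
    rw [add_div] at hK; linarith
  calc (t₀ / 2) ^ (-d) + K * A
      ≤ (t₀ / 2) ^ (-d) + (κ + Real.log (1 / ρ) / (α * Real.log 2)) * A := by gcongr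
    _ = (t₀ / 2) ^ (-d) + A * κ + A / (α * Real.log 2) * Real.log (1 / ρ) := by ring

end Multiscale

theorem dimB_image_le_of_dimB_lt {X Y : Type*} [MetricSpace X] [MetricSpace Y] {f : X → Y}
    {α p d Cd : ℝ} {E : Set X} (hD : DoublingConst X Cd) (hCd : 0 ≤ Cd) (hα : 0 < α)
    (hp : 0 < p) (hf : CompactlyHolder p α f) (hd : 0 ≤ d) (hE : dimB E < d) :
    dimB (f '' E) ≤ ((p * d / (α * p + d) : ℝ) : EReal) := by
  obtain ⟨r₀, hr₀, C, hC, hsum⟩ := hf.exists_sum_rpow_le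
  obtain ⟨u, hu, hcov⟩ :=
    mem_nhdsGT_iff_exists_Ioo_subset.1 (eventually_coverNum_le_rpow_of_dimB_lt hE)
  set t₀ := min r₀ u / 2
  have ht₀ : 0 < t₀ := half_pos (lt_min hr₀ hu)
  have ht₀r₀u : t₀ < min r₀ u := half_lt_self (lt_min hr₀ hu)
  have hscale : ∀ k : ℕ, 0 < t₀ / 2 ^ k ∧ t₀ / 2 ^ k ≤ t₀ := fun k =>
    ⟨by positivity, div_le_self ht₀.le (one_le_pow₀ one_le_two)⟩
  have hhalf : ∀ k : ℕ, 0 ≤ t₀ / 2 ^ k / 2 ∧ t₀ / 2 ^ k / 2 < t₀ / 2 ^ k := fun k =>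
    ⟨(half_pos (hscale k).1).le, half_lt_self (hscale k).1⟩
  have hcoverNum : ∀ k : ℕ,
      coverNum E (t₀ / 2 ^ k / 2) ≤ ENNReal.ofReal ((t₀ / 2 ^ k / 2) ^ (-d)) := fun k =>
    hcov ⟨by linarith [hscale k], by linarith [hscale k, hhalf k, min_le_right r₀ u]⟩
  choose S hS using fun k => exists_isNet (hhalf k).1 (hhalf k).2
    ((hcoverNum k).trans_lt ENNReal.ofReal_lt_top).ne
  obtain ⟨a, b, ha, hb, hcover⟩ := exists_coverNum_image_le hD hCd hα hp hd ht₀ hC hS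
    (fun k => by
      have := (card_le_coverNum_of_pairwise_le_dist (hS k).1 (hS k).2.1 (hhalf k).1
        (hhalf k).2).trans (hcoverNum k)
      rwa [← ENNReal.ofReal_natCast, ENNReal.ofReal_le_ofReal_iff (by positivity)] at this)
    (fun k => hsum _ (hscale k).1 (by linarith [hscale k, min_le_left r₀ u]) _ (hS k).2.1)
  exact dimB_le_of_eventually_coverNum_le_log_mul ha hb (by positivity)
    (eventually_of_mem (Ioo_mem_nhdsGT one_pos) hcover)

theorem minkowski_distortion_of_compactlyHolder_general
    {X Y : Type*} [MetricSpace X] [MetricSpace Y] (hX : DoublingSpace X)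
    {p α : ℝ} (hp : 1 < p) (hα : α ∈ Set.Ioo (0:ℝ) 1)
    {f : X → Y} (hf : CompactlyHolder p α f)
    {E : Set X} {dE : ℝ} (hdE : dimB E = (dE : EReal)) :
    dimB (f '' E) ≤ ((p * dE / (α * p + dE) : ℝ) : EReal) := by
  obtain ⟨Cd, hCd, hD⟩ := hX
  obtain ⟨hα₀, -⟩ := hα
  have hp₀ : 0 < p := by linarith
  have hdE₀ : 0 ≤ dE := EReal.coe_nonneg.1 (hdE ▸ dimB_nonneg E)
  have hcont : ContinuousAt (fun d : ℝ => p * d / (α * p + d)) dE :=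
    ContinuousAt.div (by fun_prop) (by fun_prop) (by positivity)
  refine ge_of_tendsto (x := 𝓝[>] dE) ((continuous_coe_real_ereal.tendsto _).comp
    (hcont.tendsto.mono_left nhdsWithin_le_nhds)) ?_
  filter_upwards [self_mem_nhdsWithin] with d (hd : dE < d)
  exact dimB_image_le_of_dimB_lt hD (by linarith) hα₀ hp₀ hf (by linarith)
    (hdE ▸ EReal.coe_lt_coe_iff.2 hd)

/-- **Theorem 1.1.** If `X` is doubling, `f : X → Y` is `(p,α)`-compactly Hölder,
and `E ⊆ X` is bounded with `dim_B E = dE`, then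
`dim_B f(E) ≤ p dE / (α p + dE)`. -/
theorem minkowski_distortion_of_compactlyHolder
    {X Y : Type*} [MetricSpace X] [MetricSpace Y] (hX : DoublingSpace X)
    {p α : ℝ} (hp : 1 < p) (hα : α ∈ Set.Ioo (0:ℝ) 1)
    {f : X → Y} (hf : CompactlyHolder p α f)
    {E : Set X} (hE : IsBounded E) {dE : ℝ} (hdE : dimB E = (dE : EReal)) :
    dimB (f '' E) ≤ ((p * dE / (α * p + dE) : ℝ) : EReal) :=
  minkowski_distortion_of_compactlyHolder_general hX hp hα hf hdE

end
end

section
/- Let (X,d) and (Y,d_Y) be metric spaces, p > 1, α ∈ (0,1), and let f : X → Y be a (p,α)-compactly Hölder mapping. Then f is locally α-Hölder continuous: for every point x ∈ X there exist r > 0 and C > 0 such that d_Y(f(y),f(z)) ≤ C·d(y,z)^α for all y,z ∈ B(x,r). In particular, f is continuous. -/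
open Filter Metric Set Topology MeasureTheory Bornology
open scoped ENNReal NNReal

noncomputable section

theorem continuousAt_of_dist_le_mul_rpow {X Y : Type*} [PseudoMetricSpace X]
    [PseudoMetricSpace Y] {α C : ℝ} (hα : 0 < α) {f : X → Y} {x : X}
    (h : ∀ᶠ y in 𝓝 x, dist (f y) (f x) ≤ C * dist y x ^ α) : ContinuousAt f x := by
  have hdist : Tendsto (fun y => dist y x) (𝓝 x) (𝓝 (dist x x)) :=
    (tendsto_id (x := 𝓝 x)).dist tendsto_const_nhds
  have hlim : Tendsto (fun y => C * dist y x ^ α) (𝓝 x) (𝓝 0) := by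
    simpa [Real.zero_rpow hα.ne'] using (hdist.rpow_const (Or.inr hα.le)).const_mul C
  exact tendsto_iff_dist_tendsto_zero.2 (squeeze_zero' (.of_forall fun _ => dist_nonneg) h hlim)

section

variable {X Y : Type*} [MetricSpace X] [MetricSpace Y]

theorem dist_le_holderCoef_mul {α : ℝ} {f : X → Y} {B : Set X} (hB : holderCoef α f B ≠ ⊤)
    {y z : X} (hy : y ∈ B) (hz : z ∈ B) :
    dist (f y) (f z) ≤ (holderCoef α f B).toReal * dist y z ^ α := by
  rcases eq_or_ne y z with rfl | hyz
  · rw [dist_self]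
    positivity
  have hquot : ENNReal.ofReal (dist (f y) (f z) / dist y z ^ α) ≤ holderCoef α f B :=
    le_iSup₂_of_le y hy <| le_iSup₂_of_le z hz <| le_iSup_of_le hyz le_rfl
  have hpos : 0 < dist y z ^ α := Real.rpow_pos_of_pos (dist_pos.2 hyz) α
  rw [← div_le_iff₀ hpos]
  exact (ENNReal.ofReal_le_iff_le_toReal hB).1 hquot

/-- Covering the singleton `{x}` by the single ball `B(x, r)` makes the sum in the definition
of `CompactlyHolder` one term, so the Hölder coefficient on that ball is bounded. -/
theorem CompactlyHolder.exists_holderCoef_ball_ne_top {p α : ℝ} {f : X → Y} (hp : 0 < p)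
    (hf : CompactlyHolder p α f) (x : X) : ∃ r > 0, holderCoef α f (ball x r) ≠ ⊤ := by
  obtain ⟨rE, hrE, CE, -, hsum⟩ :=
    hf {x} isCompact_singleton (1 / 2) ⟨by norm_num, by norm_num⟩
  have hbound : holderCoef α f (ball x (rE / 2)) ^ p ≤ ENNReal.ofReal CE := by
    simpa using hsum Unit inferInstance (fun _ => x) (rE / 2) (by positivity) (by linarith)
      (by simpa using mem_ball_self (x := x) (half_pos hrE)) Subsingleton.pairwise
  refine ⟨rE / 2, half_pos hrE, fun htop => ?_⟩
  rw [htop, ENNReal.top_rpow_of_pos hp, top_le_iff] at hbound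
  exact ENNReal.ofReal_ne_top hbound

end

/-- A `(p,α)`-compactly Hölder mapping is locally `α`-Hölder continuous;
in particular it is continuous. -/
theorem compactlyHolder_locallyHolder
    {X Y : Type*} [MetricSpace X] [MetricSpace Y]
    {p α : ℝ} (hp : 1 < p) (hα : α ∈ Set.Ioo (0:ℝ) 1)
    {f : X → Y} (hf : CompactlyHolder p α f) :
    (∀ x : X, ∃ r > (0:ℝ), ∃ C > (0:ℝ), ∀ y ∈ Metric.ball x r, ∀ z ∈ Metric.ball x r,
      dist (f y) (f z) ≤ C * dist y z ^ α) ∧ Continuous f := by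
  have hlocal : ∀ x : X, ∃ r > (0:ℝ), ∃ C > (0:ℝ), ∀ y ∈ ball x r, ∀ z ∈ ball x r,
      dist (f y) (f z) ≤ C * dist y z ^ α := by
    intro x
    obtain ⟨r, hr, hfin⟩ := hf.exists_holderCoef_ball_ne_top (by linarith) x
    refine ⟨r, hr, (holderCoef α f (ball x r)).toReal + 1, by positivity, fun y hy z hz => ?_⟩
    exact (dist_le_holderCoef_mul hfin hy hz).trans (by gcongr; linarith)
  refine ⟨hlocal, continuous_iff_continuousAt.2 fun x => ?_⟩
  obtain ⟨r, hr, C, -, hC⟩ := hlocal x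
  exact continuousAt_of_dist_le_mul_rpow hα.1 <|
    eventually_of_mem (ball_mem_nhds x hr) fun y hy => hC y hy x (mem_ball_self hr)

end
end

section
/- Let (X,d) be a doubling metric space with doubling constant C_d, let 0 < c₀ ≤ C₀ < ∞ and δ ∈ (0,1) with 12·C₀·δ ≤ c₀, and suppose that for an integer k ≥ 0 we are given points {z_i^k}_{i ∈ I_k} in X with |z_i^k − z_j^k| ≥ c₀δ^k for i ≠ j, together with sets {Q_i^k}_{i ∈ I_k} that are pairwise disjoint with union X and satisfy B(z_i^k, c₀δ^k/3) ⊆ Q_i^k ⊆ B(z_i^k, 2C₀δ^k) for every i ∈ I_k. Let E ⊆ X be bounded and let N_k(E) be the number of indices i ∈ I_k with Q_i^k ∩ E ≠ ∅. Then N(E, 4C₀δ^k) ≤ N_k(E) ≤ C'·N(E, δ^k), where C' = C_d·(c₀/(3(4C₀+1)))^{−log₂ C_d} depends only on c₀, C₀ and C_d. -/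
open Filter Metric Set Topology MeasureTheory Bornology
open scoped ENNReal NNReal

noncomputable section

/-! A set of diameter `δ^k` meets only cells whose centres lie in a ball of radius
`(2C₀ + 1)δ^k`. These centres are `c₀δ^k`-separated, and `m ≈ log₂ (2(2C₀+1)/c₀)` doubling
steps cover that ball by at most `C_d^m ≤ C'` balls of radius `c₀δ^k/2`, each containing at
most one centre. Conversely the cells meeting `E` themselves cover `E` by sets of diameter
`4C₀δ^k`. -/

section Real

open Real

variable {b : ℝ}

lemma le_pow_natCeil_logb (hb : 1 < b) {T : ℝ} (hT : 0 < T) : T ≤ b ^ ⌈logb b T⌉₊ :=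
  calc T = b ^ logb b T := (rpow_logb (by linarith) hb.ne' hT).symm
    _ ≤ b ^ (⌈logb b T⌉₊ : ℝ) := rpow_le_rpow_of_exponent_le hb.le (Nat.le_ceil _)
    _ = b ^ ⌈logb b T⌉₊ := rpow_natCast _ _

lemma rpow_logb_comm {a T : ℝ} (ha : 0 < a) (hT : 0 < T) :
    a ^ logb b T = T ^ logb b a := by
  rw [rpow_def_of_pos ha, rpow_def_of_pos hT, logb, logb]
  ring_nf

lemma pow_natCeil_logb_le (hb : 1 < b) {a T : ℝ} (ha : 1 ≤ a) (hT : 1 ≤ T) :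
    a ^ ⌈logb b T⌉₊ ≤ a * T ^ logb b a := by
  have hL : 0 ≤ logb b T := logb_nonneg hb hT
  calc a ^ ⌈logb b T⌉₊ = a ^ (⌈logb b T⌉₊ : ℝ) := (rpow_natCast _ _).symm
    _ ≤ a ^ (logb b T + 1) := rpow_le_rpow_of_exponent_le ha (Nat.ceil_lt_add_one hL).le
    _ = a * T ^ logb b a := by
      rw [rpow_add (by linarith), rpow_one, mul_comm, rpow_logb_comm (by linarith) (by linarith)]

end Real

lemma encard_iUnion_le_card_mul {α ι : Type*} [Fintype ι] {s : ι → Set α} {c : ℝ≥0∞}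
    (h : ∀ j, ((s j).encard : ℝ≥0∞) ≤ c) :
    ((⋃ j, s j).encard : ℝ≥0∞) ≤ Fintype.card ι * c :=
  calc ((⋃ j, s j).encard : ℝ≥0∞) ≤ ((∑ j, (s j).encard : ℕ∞) : ℝ≥0∞) :=
        ENat.toENNReal_le.2 (encard_iUnion_le_of_fintype s)
    _ = ∑ j, ((s j).encard : ℝ≥0∞) := map_sum ENat.toENNRealRingHom _ _
    _ ≤ ∑ _j : ι, c := Finset.sum_le_sum fun j _ => h j
    _ = Fintype.card ι * c := by simp

section Metric

variable {X ι : Type*}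

lemma ediam_le_of_subset_ball [PseudoMetricSpace X] {s : Set X} {x : X} {ρ : ℝ}
    (h : s ⊆ ball x ρ) : ediam s ≤ ENNReal.ofReal (2 * ρ) := by
  rcases le_or_gt ρ 0 with hρ | hρ
  · rw [subset_empty_iff.1 (h.trans (ball_eq_empty.2 hρ).subset), ediam_empty]
    exact bot_le
  calc ediam s ≤ ediam (eball x (ENNReal.ofReal ρ)) := by rw [eball_ofReal]; exact ediam_mono h
    _ ≤ 2 * ENNReal.ofReal ρ := ediam_eball_le
    _ = ENNReal.ofReal (2 * ρ) := by rw [ENNReal.ofReal_mul zero_le_two, ENNReal.ofReal_ofNat]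

/-- Pigeonhole: each ball of radius `r` contains at most one point of a `2r`-separated family. -/
lemma encard_le_card_of_separated [PseudoMetricSpace X] {z : ι → X} {r : ℝ} {s : Set ι}
    {t : Finset X} (hsep : s.Pairwise fun i j => 2 * r ≤ dist (z i) (z j))
    (hcov : ∀ i ∈ s, z i ∈ ⋃ y ∈ t, ball y r) : s.encard ≤ t.card := by
  have hball : ∀ y ∈ t, {i ∈ s | z i ∈ ball y r}.encard ≤ 1 := by
    refine fun y _ => encard_le_one_iff.2 fun i j hi hj => by_contra fun hne => ?_
    have := dist_triangle_right (z i) (z j) y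
    linarith [hsep hi.1 hj.1 hne, mem_ball.1 hi.2, mem_ball.1 hj.2]
  calc s.encard ≤ (⋃ y ∈ t, {i ∈ s | z i ∈ ball y r}).encard :=
        encard_le_encard fun i hi => by simpa [hi] using hcov i hi
    _ ≤ ∑ y ∈ t, {i ∈ s | z i ∈ ball y r}.encard := t.set_encard_biUnion_le _
    _ ≤ ∑ _y ∈ t, 1 := Finset.sum_le_sum hball
    _ = t.card := by simp

variable [MetricSpace X]

lemma coverNum_le_encard {V : ι → Set X} {s : Set ι} {E : Set X} {r : ℝ}
    (hd : ∀ i ∈ s, ediam (V i) ≤ ENNReal.ofReal r) (hE : E ⊆ ⋃ i ∈ s, V i) :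
    coverNum E r ≤ s.encard := by
  rcases s.finite_or_infinite with hs | hs
  · have := hs.fintype
    let e := Fintype.equivFin s
    refine iInf₂_le_of_le (Fintype.card s) ⟨fun j => V (e.symm j), fun j => hd _ (e.symm j).2,
      fun x hx => ?_⟩ ?_
    · obtain ⟨i, hi, hxi⟩ := mem_iUnion₂.1 (hE hx)
      exact mem_iUnion.2 ⟨e ⟨i, hi⟩, by simpa using hxi⟩
    · rw [encard_eq_coe_toFinset_card, toFinset_card, ENat.toENNReal_coe]
  · simp [hs.encard_eq]

lemma le_mul_coverNum {E : Set X} {r : ℝ} {a c : ℝ≥0∞} (hc₀ : c ≠ 0) (hc : c ≠ ⊤)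
    (h : ∀ (n : ℕ) (U : Fin n → Set X), (∀ j, ediam (U j) ≤ ENNReal.ofReal r) →
      E ⊆ ⋃ j, U j → a ≤ c * n) :
    a ≤ c * coverNum E r := by
  simp only [coverNum, ENNReal.mul_iInf_of_ne hc₀ hc]
  exact le_iInf₂ fun n ⟨U, hU, hE⟩ => h n U hU hE

lemma coverNum_le_encard_setOf_inter_nonempty {Q : ι → Set X} {E : Set X} {r : ℝ}
    (hcov : ⋃ i, Q i = univ) (hd : ∀ i, ediam (Q i) ≤ ENNReal.ofReal r) :
    coverNum E r ≤ {i | (Q i ∩ E).Nonempty}.encard := by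
  refine coverNum_le_encard (fun i _ => hd i) fun x hx => ?_
  obtain ⟨i, hi⟩ := mem_iUnion.1 (hcov.symm.subset (mem_univ x))
  exact mem_iUnion₂.2 ⟨i, ⟨x, hi, hx⟩, hi⟩

lemma encard_setOf_inter_nonempty_le_mul_coverNum {Q : ι → Set X} {E : Set X} {r : ℝ}
    {c : ℝ≥0∞} (hc₀ : c ≠ 0) (hc : c ≠ ⊤)
    (h : ∀ U : Set X, ediam U ≤ ENNReal.ofReal r → ({i | (Q i ∩ U).Nonempty}.encard : ℝ≥0∞) ≤ c) :
    ({i | (Q i ∩ E).Nonempty}.encard : ℝ≥0∞) ≤ c * coverNum E r := by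
  refine le_mul_coverNum hc₀ hc fun n U hU hEU => ?_
  have hsub : {i | (Q i ∩ E).Nonempty} ⊆ ⋃ j, {i | (Q i ∩ U j).Nonempty} := by
    rintro i ⟨x, hxQ, hxE⟩
    obtain ⟨j, hj⟩ := mem_iUnion.1 (hEU hxE)
    exact mem_iUnion.2 ⟨j, x, hxQ, hj⟩
  calc ({i | (Q i ∩ E).Nonempty}.encard : ℝ≥0∞)
      ≤ ((⋃ j, {i | (Q i ∩ U j).Nonempty}).encard : ℝ≥0∞) :=
        ENat.toENNReal_le.2 (encard_le_encard hsub)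
    _ ≤ Fintype.card (Fin n) * c := encard_iUnion_le_card_mul fun j => h _ (hU j)
    _ = c * n := by rw [Fintype.card_fin, mul_comm]

namespace DoublingConst

variable {Cd : ℝ}

lemma exists_finset_ball_pow (hX : DoublingConst X Cd) (hCd : 0 ≤ Cd) (m : ℕ) (x : X)
    {r : ℝ} (hr : 0 < r) :
    ∃ t : Finset X, (t.card : ℝ) ≤ Cd ^ m ∧ ball x (2 ^ m * r) ⊆ ⋃ y ∈ t, ball y r := by
  classical
  induction m generalizing x with
  | zero => exact ⟨{x}, by simp, by simp⟩
  | succ m ih =>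
    obtain ⟨t, ht, hsub⟩ := hX x (2 ^ m * r) (by positivity)
    choose f hf hsubf using fun y : X => ih y
    refine ⟨t.biUnion f, ?_, ?_⟩
    · calc ((t.biUnion f).card : ℝ) ≤ ∑ y ∈ t, ((f y).card : ℝ) := by
            exact_mod_cast Finset.card_biUnion_le
        _ ≤ ∑ _y ∈ t, Cd ^ m := Finset.sum_le_sum fun y _ => hf y
        _ = t.card * Cd ^ m := by rw [Finset.sum_const, nsmul_eq_mul]
        _ ≤ Cd ^ (m + 1) := by rw [pow_succ']; gcongr
    · intro p hp
      rw [pow_succ', mul_assoc] at hp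
      obtain ⟨y, hy, hpy⟩ := mem_iUnion₂.1 (hsub hp)
      obtain ⟨w, hw, hpw⟩ := mem_iUnion₂.1 (hsubf y hpy)
      exact mem_iUnion₂.2 ⟨w, Finset.mem_biUnion.2 ⟨y, hy, hw⟩, hpw⟩

lemma encard_setOf_mem_ball_le (hX : DoublingConst X Cd) (hCd : 1 ≤ Cd) {z : ι → X}
    {ε R : ℝ} (hε : 0 < ε) (hεR : ε ≤ 2 * R)
    (hsep : Pairwise fun i j => ε ≤ dist (z i) (z j)) (u : X) :
    ({i | z i ∈ ball u R}.encard : ℝ≥0∞) ≤ ENNReal.ofReal (Cd * (2 * R / ε) ^ Real.logb 2 Cd) := by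
  set m := ⌈Real.logb 2 (2 * R / ε)⌉₊
  have hR : R ≤ 2 ^ m * (ε / 2) := by
    have := le_pow_natCeil_logb one_lt_two (T := 2 * R / ε) (div_pos (by linarith) hε)
    rw [div_le_iff₀ hε] at this
    linarith
  obtain ⟨t, ht, hcov⟩ := hX.exists_finset_ball_pow (by linarith) m u (half_pos hε)
  have hcard : {i | z i ∈ ball u R}.encard ≤ t.card :=
    encard_le_card_of_separated (fun i _ j _ hij => by linarith [hsep hij])
      fun i hi => hcov (ball_subset_ball hR hi)
  calc ({i | z i ∈ ball u R}.encard : ℝ≥0∞) ≤ ENNReal.ofReal t.card := by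
        simpa using ENat.toENNReal_le.2 hcard
    _ ≤ ENNReal.ofReal (Cd * (2 * R / ε) ^ Real.logb 2 Cd) :=
      ENNReal.ofReal_le_ofReal <| ht.trans <|
        pow_natCeil_logb_le one_lt_two hCd ((one_le_div hε).2 hεR)

lemma setOf_inter_nonempty_subset {z : ι → X} {Q : ι → Set X} {ρ r : ℝ} {U : Set X} {p : X}
    (hup : ∀ i, Q i ⊆ ball (z i) ρ) (hr : 0 ≤ r) (hU : ediam U ≤ ENNReal.ofReal r) (hp : p ∈ U) :
    {i | (Q i ∩ U).Nonempty} ⊆ {i | z i ∈ ball p (ρ + r)} := by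
  rintro i ⟨q, hqQ, hqU⟩
  have hzq : dist (z i) q < ρ := by rw [dist_comm]; exact hup i hqQ
  have hqp : dist q p ≤ r := by
    have := (edist_le_ediam_of_mem hqU hp).trans hU
    rw [edist_dist] at this
    exact (ENNReal.ofReal_le_ofReal_iff hr).1 this
  exact lt_of_le_of_lt (dist_triangle _ _ _) (by linarith)

lemma encard_setOf_inter_nonempty_le (hX : DoublingConst X Cd) (hCd : 1 ≤ Cd) {z : ι → X}
    {Q : ι → Set X} {ε ρ r : ℝ} (hε : 0 < ε) (hsep : Pairwise fun i j => ε ≤ dist (z i) (z j))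
    (hup : ∀ i, Q i ⊆ ball (z i) ρ) (hr : 0 ≤ r) (hερ : ε ≤ 2 * (ρ + r)) {U : Set X}
    (hU : ediam U ≤ ENNReal.ofReal r) :
    ({i | (Q i ∩ U).Nonempty}.encard : ℝ≥0∞) ≤
      ENNReal.ofReal (Cd * (2 * (ρ + r) / ε) ^ Real.logb 2 Cd) := by
  rcases U.eq_empty_or_nonempty with rfl | ⟨p, hp⟩
  · simp
  calc ({i | (Q i ∩ U).Nonempty}.encard : ℝ≥0∞) ≤ ({i | z i ∈ ball p (ρ + r)}.encard : ℝ≥0∞) :=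
        ENat.toENNReal_le.2 (encard_le_encard (setOf_inter_nonempty_subset hup hr hU hp))
    _ ≤ _ := hX.encard_setOf_mem_ball_le hCd hε hερ hsep p

end DoublingConst

end Metric

theorem coverNum_dyadic_comparison_general {X : Type*} [MetricSpace X]
    {Cd : ℝ} (hCd : 1 ≤ Cd) (hX : DoublingConst X Cd)
    {c₀ C₀ δ : ℝ} (hc₀ : 0 < c₀) (hcC : c₀ ≤ C₀) (hδ : δ ∈ Set.Ioo (0:ℝ) 1)
    {k : ℕ}
    {ι : Type*} (z : ι → X) (Q : ι → Set X)
    (hsep : ∀ i j : ι, i ≠ j → c₀ * δ ^ k ≤ dist (z i) (z j))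
    (hcov : ⋃ i, Q i = Set.univ)
    (hup : ∀ i, Q i ⊆ Metric.ball (z i) (2 * C₀ * δ ^ k))
    {E : Set X} :
    coverNum E (4 * C₀ * δ ^ k) ≤ ({i : ι | (Q i ∩ E).Nonempty}.encard : ℝ≥0∞) ∧
    ({i : ι | (Q i ∩ E).Nonempty}.encard : ℝ≥0∞) ≤
      ENNReal.ofReal (Cd * (c₀ / (3 * (4 * C₀ + 1))) ^ (-(Real.logb 2 Cd))) *
        coverNum E (δ ^ k) := by
  have hδk : 0 < δ ^ k := pow_pos hδ.1 k
  have hC₀ : 0 < C₀ := hc₀.trans_le hcC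
  have hconst : (2 * (2 * C₀ * δ ^ k + δ ^ k) / (c₀ * δ ^ k)) ^ Real.logb 2 Cd ≤
      (c₀ / (3 * (4 * C₀ + 1))) ^ (-(Real.logb 2 Cd)) := by
    rw [Real.rpow_neg (by positivity), ← Real.inv_rpow (by positivity), inv_div]
    refine Real.rpow_le_rpow (by positivity) ?_ (Real.logb_nonneg one_lt_two hCd)
    rw [show 2 * (2 * C₀ * δ ^ k + δ ^ k) = 2 * (2 * C₀ + 1) * δ ^ k by ring,
      mul_div_mul_right _ _ hδk.ne']
    exact div_le_div_of_nonneg_right (by linarith) hc₀.le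
  refine ⟨coverNum_le_encard_setOf_inter_nonempty hcov fun i => ?_,
    encard_setOf_inter_nonempty_le_mul_coverNum (ENNReal.ofReal_pos.2 (by positivity)).ne'
      ENNReal.ofReal_ne_top fun U hU => ?_⟩
  · exact (ediam_le_of_subset_ball (hup i)).trans_eq (by ring_nf)
  · refine (hX.encard_setOf_inter_nonempty_le hCd (by positivity) hsep hup hδk.le
      (by nlinarith) hU).trans (ENNReal.ofReal_le_ofReal ?_)
    exact mul_le_mul_of_nonneg_left hconst (by linarith)

/-- Comparison of covering numbers with dyadic cube counts at a fixed level `k`: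
`N(E, 4C₀δ^k) ≤ N_k(E) ≤ C' N(E, δ^k)` with
`C' = C_d (c₀ / (3(4C₀+1)))^{-log₂ C_d}`. -/
theorem coverNum_dyadic_comparison {X : Type*} [MetricSpace X]
    {Cd : ℝ} (hCd : 1 ≤ Cd) (hX : DoublingConst X Cd)
    {c₀ C₀ δ : ℝ} (hc₀ : 0 < c₀) (hcC : c₀ ≤ C₀) (hδ : δ ∈ Set.Ioo (0:ℝ) 1)
    (h12 : 12 * C₀ * δ ≤ c₀) {k : ℕ}
    {ι : Type*} (z : ι → X) (Q : ι → Set X)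
    (hsep : ∀ i j : ι, i ≠ j → c₀ * δ ^ k ≤ dist (z i) (z j))
    (hdisj : ∀ i j : ι, i ≠ j → Disjoint (Q i) (Q j))
    (hcov : ⋃ i, Q i = Set.univ)
    (hlow : ∀ i, Metric.ball (z i) (c₀ * δ ^ k / 3) ⊆ Q i)
    (hup : ∀ i, Q i ⊆ Metric.ball (z i) (2 * C₀ * δ ^ k))
    {E : Set X} (hE : IsBounded E) :
    coverNum E (4 * C₀ * δ ^ k) ≤ ({i : ι | (Q i ∩ E).Nonempty}.encard : ℝ≥0∞) ∧
    ({i : ι | (Q i ∩ E).Nonempty}.encard : ℝ≥0∞) ≤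
      ENNReal.ofReal (Cd * (c₀ / (3 * (4 * C₀ + 1))) ^ (-(Real.logb 2 Cd))) *
        coverNum E (δ ^ k) :=
  coverNum_dyadic_comparison_general hCd hX hc₀ hcC hδ z Q hsep hcov hup
end
end
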